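/- Let p be a prime with p ≡ 7 (mod 8). Then there are no positive integers x, y, z with x² + y² + z⁸ = p². -/

import Mathlib

/-!
Write `x² + y² = p² - z⁸ = (p - z⁴)(p + z⁴)`. Since `p ≡ 7` and `z⁴ ≡ 0` or `1 (mod 8)`, the factor
`p - z⁴` is `≡ 7` or `6 (mod 8)`, so its odd part is `≡ 3 (mod 4)` and hence not a sum of two
squares: some prime `q ≡ 3 (mod 4)` divides it to an odd power. As `q < p` is odd, `q` does not
divide `p + z⁴` (it would divide `2p`), so `q` also divides `x² + y²` to an odd power,
contradicting the sum of two squares theorem.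
-/

theorem Nat.sq_add_sq_mod_four_ne_three (x y : ℕ) : (x ^ 2 + y ^ 2) % 4 ≠ 3 := by
  rw [Nat.add_mod, Nat.pow_mod, Nat.pow_mod y]
  have hx := Nat.mod_lt x (show 4 > 0 by norm_num)
  have hy := Nat.mod_lt y (show 4 > 0 by norm_num)
  interval_cases x % 4 <;> interval_cases y % 4 <;> decide

theorem Nat.pow_four_mod_eight (z : ℕ) : z ^ 4 % 8 = 0 ∨ z ^ 4 % 8 = 1 := by
  rw [Nat.pow_mod]
  have hz := Nat.mod_lt z (show 8 > 0 by norm_num)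
  interval_cases z % 8 <;> decide

theorem padicValNat_mul_of_not_dvd {q a b : ℕ} [Fact q.Prime] (hb : ¬ q ∣ b) :
    padicValNat q (a * b) = padicValNat q a := by
  rcases eq_or_ne a 0 with rfl | ha
  · simp
  have hb0 : b ≠ 0 := by rintro rfl; exact hb (dvd_zero q)
  rw [padicValNat.mul ha hb0, padicValNat.eq_zero_of_not_dvd hb, add_zero]

theorem Nat.even_padicValNat_sq_add_sq (x y : ℕ) {q : ℕ} (hq : q.Prime) (hq4 : q % 4 = 3) :
    Even (padicValNat q (x ^ 2 + y ^ 2)) := by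
  by_cases hmem : q ∈ (x ^ 2 + y ^ 2).primeFactors
  · exact Nat.eq_sq_add_sq_iff.mp ⟨x, y, rfl⟩ q hmem hq4
  · rw [← Nat.support_factorization, Finsupp.notMem_support_iff] at hmem
    rw [← Nat.factorization_def _ hq, hmem]
    exact Even.zero

theorem Nat.exists_prime_mod_four_eq_three_odd_padicValNat {n : ℕ} (hn : n % 4 = 3) :
    ∃ q, q.Prime ∧ q % 4 = 3 ∧ Odd (padicValNat q n) := by
  by_contra! hall
  obtain ⟨x, y, rfl⟩ := Nat.eq_sq_add_sq_iff.mpr fun q hq hq4 ↦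
    Nat.not_odd_iff_even.mp (hall q (Nat.prime_of_mem_primeFactors hq) hq4)
  exact Nat.sq_add_sq_mod_four_ne_three x y hn

theorem Nat.exists_prime_mod_four_eq_three_odd_padicValNat_of_mod_eight
    {n : ℕ} (hn : n % 8 = 6 ∨ n % 8 = 7) :
    ∃ q, q.Prime ∧ q % 4 = 3 ∧ Odd (padicValNat q n) := by
  rcases hn with hn | hn
  · obtain ⟨q, hq, hq4, hodd⟩ :=
      Nat.exists_prime_mod_four_eq_three_odd_padicValNat (n := n / 2) (by omega)
    have : Fact q.Prime := ⟨hq⟩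
    refine ⟨q, hq, hq4, ?_⟩
    rwa [show n = n / 2 * 2 by omega, padicValNat_mul_of_not_dvd fun h2 ↦ by
      have := (Nat.prime_dvd_prime_iff_eq hq Nat.prime_two).mp h2; omega]
  · exact Nat.exists_prime_mod_four_eq_three_odd_padicValNat (by omega)

theorem Nat.Prime.not_dvd_add_of_dvd_sub {p q c : ℕ} (hp : p.Prime) (hq : q.Prime) (hq2 : q ≠ 2)
    (hc : 0 < c) (hcp : c < p) (hqd : q ∣ p - c) : ¬ q ∣ p + c := by
  intro hqa
  have hq2p : q ∣ 2 * p := by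
    rw [show 2 * p = p - c + (p + c) by omega]
    exact dvd_add hqd hqa
  have hqp : q < p := by have := Nat.le_of_dvd (by omega) hqd; omega
  rcases (Nat.Prime.dvd_mul hq).mp hq2p with h | h
  · exact hq2 ((Nat.prime_dvd_prime_iff_eq hq Nat.prime_two).mp h)
  · exact hqp.ne ((Nat.prime_dvd_prime_iff_eq hq hp).mp h)

theorem no_rep_k8 (p : ℕ) (hp : p.Prime) (hp7 : p % 8 = 7) :
    ¬ ∃ x y z : ℕ, 0 < x ∧ 0 < y ∧ 0 < z ∧ x ^ 2 + y ^ 2 + z ^ 8 = p ^ 2 := by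
  rintro ⟨x, y, z, hx, -, hz, h⟩
  have hz4 : 0 < z ^ 4 := by positivity
  have hz4p : z ^ 4 < p := by
    have : 0 < x ^ 2 := by positivity
    have : (z ^ 4) ^ 2 = z ^ 8 := by ring
    exact lt_of_pow_lt_pow_left₀ 2 p.zero_le (by omega)
  have hfactor : x ^ 2 + y ^ 2 = (p - z ^ 4) * (p + z ^ 4) := by
    have : (p - z ^ 4) * (p + z ^ 4) + z ^ 8 = p ^ 2 := by
      zify [hz4p.le]; ring
    omega
  obtain ⟨q, hq, hq4, hodd⟩ :=
    Nat.exists_prime_mod_four_eq_three_odd_padicValNat_of_mod_eight (n := p - z ^ 4)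
      (by have := Nat.pow_four_mod_eight z; omega)
  have : Fact q.Prime := ⟨hq⟩
  have hqd : q ∣ p - z ^ 4 := dvd_of_one_le_padicValNat hodd.pos
  have hq2 : q ≠ 2 := by omega
  have heven := Nat.even_padicValNat_sq_add_sq x y hq hq4
  rw [hfactor, padicValNat_mul_of_not_dvd (hp.not_dvd_add_of_dvd_sub hq hq2 hz4 hz4p hqd)] at heven
  exact Nat.not_even_iff_odd.mpr hodd heven
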